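/- arXiv:2002.08615 — 2 statements merged into one kernel-verified Lean document; each statement's English description precedes it below -/
import Mathlib

section
/- For every nonnegative integers m, n, ℓ with n ≥ m and every real t with 0 ≤ t ≤ 1, one has P_ℓ^{(n,m)}(2t² − 1) = (2·(−1)^ℓ·(m+ℓ)!)/(√π·ℓ!·Γ(m+1/2)) · ∫_0^1 (1 − v²)^{m − 1/2} · ₂F₁(−ℓ, ℓ+n+m+1; 1/2; t²v²) dv. -/
open Real MeasureTheory

/-- Generalized binomial coefficient `C(a, j) = a(a-1)⋯(a-j+1)/j!`. -/
noncomputable def genBinom (a : ℝ) (j : ℕ) : ℝ :=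
  (∏ i ∈ Finset.range j, (a - i)) / (Nat.factorial j)

/-- Jacobi polynomial `P_ℓ^{(α,β)}(x)`. -/
noncomputable def jacobiP (α β : ℝ) (l : ℕ) (x : ℝ) : ℝ :=
  ∑ k ∈ Finset.range (l + 1),
    genBinom ((l : ℝ) + α) (l - k) * genBinom ((l : ℝ) + β) k *
      ((x - 1) / 2) ^ k * ((x + 1) / 2) ^ (l - k)

/-- Gegenbauer (ultraspherical) polynomial `C_m^{(λ)}(x)`. -/
noncomputable def gegenbauerC (m : ℕ) (lam : ℝ) (x : ℝ) : ℝ :=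
  ∑ k ∈ Finset.range (m / 2 + 1),
    (-1 : ℝ) ^ k *
      (Real.Gamma (lam + m - k) /
        (Real.Gamma lam * (Nat.factorial k) * (Nat.factorial (m - 2 * k)))) *
      (2 * x) ^ (m - 2 * k)

/-- Pochhammer symbol `(q)_k = q(q+1)⋯(q+k-1)`. -/
noncomputable def poch (q : ℝ) (k : ℕ) : ℝ := ∏ i ∈ Finset.range k, (q + i)

/-- Terminating Gauss hypergeometric function `₂F₁(-m, b; c; z)`. -/
noncomputable def hyp2F1 (m : ℕ) (b c z : ℝ) : ℝ :=
  ∑ k ∈ Finset.range (m + 1),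
    poch (-(m : ℝ)) k * poch b k / (poch c k * (Nat.factorial k)) * z ^ k

/-- The operator `(Df)(u) = -(1/sin u) f'(u)`. -/
noncomputable def Dop (f : ℝ → ℝ) : ℝ → ℝ := fun u => -(1 / Real.sin u) * deriv f u

/-!
Both sides are polynomials in `z = t²`. At `x = 2z - 1` the Jacobi sum is in powers of `z` and
`z - 1`; expanding `(z - 1)^k` binomially and summing the inner sums by Vandermonde's identity gives
`(-1)^(l-j) C(l+m, l-j) C(l+n+m+j, j)` as the coefficient of `z^j`. On the right, the substitution
`u = v²` turns the integral of `(1 - v²)^(m - 1/2) v^(2k)` into half the Beta integral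
`B(k + 1/2, m + 1/2)`, and `Γ(k + 1/2) = (1/2)_k √π` cancels the denominator `(1/2)_k` of the
hypergeometric coefficient, leaving the same number.
-/

open Finset Nat

lemma genBinom_natCast (N j : ℕ) : genBinom N j = N.choose j := by
  rw [genBinom, ← descPochhammer_eval_eq_prod_range, descPochhammer_eval_eq_descFactorial,
    Nat.descFactorial_eq_factorial_mul_choose]
  push_cast
  field_simp

lemma jacobiP_natCast_two_mul_sub_one (n m l : ℕ) (z : ℝ) :
    jacobiP n m l (2 * z - 1) = ∑ k ∈ range (l + 1),
      ((l + n).choose (l - k) : ℝ) * (l + m).choose k * (z - 1) ^ k * z ^ (l - k) := by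
  refine sum_congr rfl fun k _ => ?_
  rw [← Nat.cast_add, ← Nat.cast_add, genBinom_natCast, genBinom_natCast]
  ring_nf

lemma poch_succ (q : ℝ) (k : ℕ) : poch q (k + 1) = poch q k * (q + k) := prod_range_succ _ _

lemma poch_neg_natCast {l k : ℕ} (hk : k ≤ l) : poch (-l) k = (-1) ^ k * (l ! / (l - k) !) := by
  have hprod : poch (-l) k = (-1) ^ k * l.descFactorial k := by
    have hfactor : ∀ i ∈ range k, -(l : ℝ) + i = -1 * (l - i) := fun i _ => by ring
    rw [poch, prod_congr rfl hfactor, prod_mul_distrib, prod_const, card_range,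
      ← descPochhammer_eval_eq_prod_range, descPochhammer_eval_eq_descFactorial]
  rw [hprod, ← Nat.factorial_mul_descFactorial hk]
  push_cast
  field_simp

lemma poch_natCast_add_one (a k : ℕ) : poch (a + 1) k = (a + k) ! / a ! := by
  rw [eq_div_iff (by positivity), ← factorial_mul_ascFactorial, ascFactorial_eq_prod_range, poch]
  push_cast
  ring

lemma Gamma_natCast_add_half (k : ℕ) : Gamma (k + 1 / 2) = poch (1 / 2) k * √π := by
  induction k with
  | zero => simp [poch, -one_div, Real.Gamma_one_half_eq]
  | succ k ih =>
    rw [Nat.cast_succ, add_right_comm, Gamma_add_one (by positivity), ih, poch_succ]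
    ring

lemma choose_mul_choose_sub_sub {l m j r : ℕ} (hrj : r ≤ j) (hjl : j ≤ l) :
    (l + m).choose (l - r) * (l - r).choose (j - r)
      = (l + m).choose (l - j) * (m + j).choose (j - r) := by
  rw [← choose_symm (by omega : j - r ≤ l - r), show l - r - (j - r) = l - j by omega,
    choose_mul (by omega : l - j ≤ l - r)]
  congr 2 <;> omega

lemma sum_range_choose_mul_choose_sub (a b j : ℕ) :
    ∑ r ∈ range (j + 1), (a.choose r : ℝ) * b.choose (j - r) = (a + b).choose j := by
  rw [add_choose_eq, Finset.Nat.sum_antidiagonal_eq_sum_range_succ_mk]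
  push_cast
  rfl

lemma sum_choose_mul_sub_one_pow_mul_pow (n m l : ℕ) (z : ℝ) :
    ∑ k ∈ range (l + 1),
        ((l + n).choose (l - k) : ℝ) * (l + m).choose k * (z - 1) ^ k * z ^ (l - k)
      = ∑ j ∈ range (l + 1),
          (-1) ^ (l - j) * ((l + m).choose (l - j) : ℝ) * (l + n + m + j).choose j * z ^ j := by
  set T : ℕ → ℕ → ℝ := fun k i =>
    (-1) ^ (k - i) * (l + n).choose (l - k) * ((l + m).choose k * k.choose i) * z ^ (l - k + i)
  set G : ℕ → ℕ → ℝ := fun j r =>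
    (-1) ^ (l - j) * (l + m).choose (l - j) * ((l + n).choose r * (m + j).choose (j - r)) * z ^ j
  have hexpand : ∀ k ∈ range (l + 1), ((l + n).choose (l - k) : ℝ) * (l + m).choose k *
      (z - 1) ^ k * z ^ (l - k) = ∑ i ∈ range (k + 1), T k i := by
    intro k _
    rw [sub_eq_add_neg, add_pow, mul_sum, sum_mul]
    refine sum_congr rfl fun i _ => ?_
    simp only [T, pow_add]
    ring
  -- `j = l - k + i` is the exponent of `z` in `T k i`, and `r = l - k`.
  have hreindex : ∑ x ∈ (range (l + 1)).sigma (fun j => range (j + 1)), G x.1 x.2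
      = ∑ x ∈ (range (l + 1)).sigma (fun k => range (k + 1)), T x.1 x.2 := by
    refine sum_nbij' (fun x => ⟨l - x.2, x.1 - x.2⟩) (fun x => ⟨l - x.1 + x.2, l - x.1⟩)
      ?_ ?_ ?_ ?_ ?_ <;> rintro ⟨a, b⟩ hab <;> simp only [mem_sigma, mem_range] at hab ⊢
    · omega
    · omega
    · exact Sigma.ext (by dsimp only; omega) (heq_of_eq (by dsimp only; omega))
    · exact Sigma.ext (by dsimp only; omega) (heq_of_eq (by dsimp only; omega))
    · have hchoose :=
        choose_mul_choose_sub_sub (l := l) (m := m) (by omega : b ≤ a) (by omega : a ≤ l)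
      simp only [G, T, show l - (l - b) = b by omega, show l - b - (a - b) = l - a by omega,
        show b + (a - b) = a by omega, ← Nat.cast_mul, hchoose]
      push_cast
      ring
  rw [sum_congr rfl hexpand, sum_sigma', ← hreindex, ← sum_sigma']
  refine sum_congr rfl fun j _ => ?_
  simp only [G, ← sum_mul, ← mul_sum, sum_range_choose_mul_choose_sub]
  rw [show l + n + (m + j) = l + n + m + j by ring]

lemma ofReal_rpow_mul_one_sub_rpow_eqOn (p q : ℝ) :
    Set.EqOn (fun x : ℝ => (x : ℂ) ^ ((p : ℂ) - 1) * (1 - (x : ℂ)) ^ ((q : ℂ) - 1))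
      (fun x : ℝ => ((x ^ (p - 1) * (1 - x) ^ (q - 1) : ℝ) : ℂ)) (Set.uIcc 0 1) := by
  intro x hx
  rw [Set.uIcc_of_le zero_le_one] at hx
  simp only [Complex.ofReal_mul, Complex.ofReal_cpow hx.1, Complex.ofReal_cpow (sub_nonneg.2 hx.2)]
  push_cast
  rfl

lemma intervalIntegrable_rpow_mul_one_sub_rpow {p q : ℝ} (hp : 0 < p) (hq : 0 < q) :
    IntervalIntegrable (fun x : ℝ => x ^ (p - 1) * (1 - x) ^ (q - 1)) volume 0 1 := by
  have h := (Complex.betaIntegral_convergent (u := p) (v := q) (by simpa) (by simpa)).congr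
    ((ofReal_rpow_mul_one_sub_rpow_eqOn p q).mono Set.uIoc_subset_uIcc)
  exact ⟨by simpa [IntegrableOn] using h.1.re, by simp⟩

lemma integral_rpow_mul_one_sub_rpow {p q : ℝ} (hp : 0 < p) (hq : 0 < q) :
    ∫ x in (0 : ℝ)..1, x ^ (p - 1) * (1 - x) ^ (q - 1) = Gamma p * Gamma q / Gamma (p + q) := by
  have h := Complex.betaIntegral_eq_Gamma_mul_div p q (by simpa) (by simpa)
  rw [Complex.betaIntegral, intervalIntegral.integral_congr (ofReal_rpow_mul_one_sub_rpow_eqOn p q),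
    intervalIntegral.integral_ofReal, ← Complex.ofReal_add, Complex.Gamma_ofReal,
    Complex.Gamma_ofReal, Complex.Gamma_ofReal] at h
  exact_mod_cast h

lemma sq_image_Ioo_zero_one : (fun v : ℝ => v ^ 2) '' Set.Ioo 0 1 = Set.Ioo 0 1 := by
  ext u
  constructor
  · rintro ⟨v, ⟨hv0, hv1⟩, rfl⟩
    exact ⟨by positivity, by nlinarith⟩
  · rintro ⟨hu0, hu1⟩
    exact ⟨√u, ⟨Real.sqrt_pos.2 hu0, (Real.sqrt_lt' one_pos).2 (by simpa using hu1)⟩,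
      Real.sq_sqrt hu0.le⟩

lemma hasDerivWithinAt_sq_Ioo :
    ∀ v ∈ Set.Ioo (0 : ℝ) 1,
      HasDerivWithinAt (fun v : ℝ => v ^ 2) (2 * v) (Set.Ioo 0 1) v :=
  fun v _ => by simpa using (hasDerivAt_pow 2 v).hasDerivWithinAt

lemma injOn_sq_Ioo : Set.InjOn (fun v : ℝ => v ^ 2) (Set.Ioo 0 1) :=
  (pow_left_strictMonoOn₀ two_ne_zero).injOn.mono fun _ hv => le_of_lt hv.1

lemma abs_two_mul_smul_comp_sq_eqOn (f : ℝ → ℝ) :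
    Set.EqOn (fun v => |2 * v| • f (v ^ 2)) (fun v => 2 * v * f (v ^ 2)) (Set.Ioo 0 1) :=
  fun v hv => by simp [abs_of_pos hv.1]

lemma integral_Ioo_two_mul_comp_sq (f : ℝ → ℝ) :
    ∫ v in Set.Ioo (0 : ℝ) 1, 2 * v * f (v ^ 2) = ∫ u in Set.Ioo (0 : ℝ) 1, f u := by
  rw [← setIntegral_congr_fun measurableSet_Ioo (abs_two_mul_smul_comp_sq_eqOn f),
    ← integral_image_eq_integral_abs_deriv_smul measurableSet_Ioo hasDerivWithinAt_sq_Ioo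
      injOn_sq_Ioo, sq_image_Ioo_zero_one]

lemma integrableOn_Ioo_two_mul_comp_sq_iff (f : ℝ → ℝ) :
    IntegrableOn (fun v => 2 * v * f (v ^ 2)) (Set.Ioo 0 1) ↔ IntegrableOn f (Set.Ioo 0 1) := by
  rw [← integrableOn_congr_fun (abs_two_mul_smul_comp_sq_eqOn f) measurableSet_Ioo,
    ← integrableOn_image_iff_integrableOn_abs_deriv_smul measurableSet_Ioo hasDerivWithinAt_sq_Ioo
      injOn_sq_Ioo, sq_image_Ioo_zero_one]

lemma mul_sq_rpow_natCast_add_half_sub_one {v : ℝ} (hv : 0 < v) (k : ℕ) :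
    v * (v ^ 2) ^ ((k : ℝ) + 1 / 2 - 1) = v ^ (2 * k) := by
  rw [← Real.rpow_natCast v 2, ← Real.rpow_mul hv.le, mul_comm, ← Real.rpow_add_one hv.ne',
    ← Real.rpow_natCast]
  push_cast
  ring_nf

lemma two_mul_mul_beta_integrand_comp_sq_eqOn (k : ℕ) (a : ℝ) :
    Set.EqOn
      (fun v : ℝ => 2 * v * ((v ^ 2) ^ ((k : ℝ) + 1 / 2 - 1) * (1 - v ^ 2) ^ (a + 1 / 2 - 1)))
      (fun v => 2 * ((1 - v ^ 2) ^ (a - 1 / 2) * v ^ (2 * k))) (Set.Ioo 0 1) := by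
  intro v hv
  dsimp only
  rw [← mul_sq_rpow_natCast_add_half_sub_one hv.1 k, show a + 1 / 2 - 1 = a - 1 / 2 by ring]
  ring

lemma intervalIntegrable_one_sub_sq_rpow_mul_pow (k : ℕ) {a : ℝ} (ha : -1 / 2 < a) :
    IntervalIntegrable (fun v : ℝ => (1 - v ^ 2) ^ (a - 1 / 2) * v ^ (2 * k)) volume 0 1 := by
  have hbeta := intervalIntegrable_rpow_mul_one_sub_rpow (p := k + 1 / 2) (q := a + 1 / 2)
    (by positivity) (by linarith)
  rw [intervalIntegrable_iff_integrableOn_Ioo_of_le zero_le_one] at hbeta ⊢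
  have htwo := ((integrableOn_Ioo_two_mul_comp_sq_iff _).2 hbeta).congr_fun
    (two_mul_mul_beta_integrand_comp_sq_eqOn k a) measurableSet_Ioo
  exact (integrable_const_mul_iff (isUnit_iff_ne_zero.2 two_ne_zero) _).1 htwo

lemma integral_one_sub_sq_rpow_mul_pow (k : ℕ) {a : ℝ} (ha : -1 / 2 < a) :
    ∫ v in (0 : ℝ)..1, (1 - v ^ 2) ^ (a - 1 / 2) * v ^ (2 * k)
      = Gamma (k + 1 / 2) * Gamma (a + 1 / 2) / (2 * Gamma (k + a + 1)) := by
  have hbeta := integral_rpow_mul_one_sub_rpow (p := k + 1 / 2) (q := a + 1 / 2)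
    (by positivity) (by linarith)
  have hGamma : Gamma (k + a + 1) ≠ 0 := (Gamma_pos_of_pos (by linarith)).ne'
  rw [intervalIntegral.integral_of_le zero_le_one, integral_Ioc_eq_integral_Ioo,
    ← integral_Ioo_two_mul_comp_sq, setIntegral_congr_fun measurableSet_Ioo
      (two_mul_mul_beta_integrand_comp_sq_eqOn k a), integral_const_mul,
    show (k : ℝ) + 1 / 2 + (a + 1 / 2) = k + a + 1 by ring, eq_div_iff hGamma] at hbeta
  rw [intervalIntegral.integral_of_le zero_le_one, integral_Ioc_eq_integral_Ioo,
    eq_div_iff (mul_ne_zero two_ne_zero hGamma), ← hbeta]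
  ring

lemma integral_one_sub_sq_rpow_mul_hyp2F1 (l : ℕ) {a : ℝ} (ha : -1 / 2 < a) (b c z : ℝ) :
    ∫ v in (0 : ℝ)..1, (1 - v ^ 2) ^ (a - 1 / 2) * hyp2F1 l b c (z * v ^ 2)
      = ∑ k ∈ range (l + 1), poch (-l) k * poch b k / (poch c k * k !) * z ^ k *
          (Gamma (k + 1 / 2) * Gamma (a + 1 / 2) / (2 * Gamma (k + a + 1))) := by
  have hexpand : (fun v : ℝ => (1 - v ^ 2) ^ (a - 1 / 2) * hyp2F1 l b c (z * v ^ 2))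
      = fun v => ∑ k ∈ range (l + 1), poch (-l) k * poch b k / (poch c k * k !) * z ^ k *
          ((1 - v ^ 2) ^ (a - 1 / 2) * v ^ (2 * k)) := by
    funext v
    rw [hyp2F1, mul_sum]
    exact sum_congr rfl fun k _ => by ring
  rw [hexpand, intervalIntegral.integral_finsetSum
    fun k _ => (intervalIntegrable_one_sub_sq_rpow_mul_pow k ha).const_mul _]
  simp_rw [intervalIntegral.integral_const_mul, integral_one_sub_sq_rpow_mul_pow _ ha]

lemma prefactor_mul_coeff_eq_choose_mul_choose {n m l k : ℕ} (hk : k ≤ l) :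
    2 * (-1) ^ l * ((m + l) ! : ℝ) / (√π * l ! * Gamma (m + 1 / 2)) *
      (poch (-l) k * poch ((l : ℝ) + n + m + 1) k / (poch (1 / 2) k * k !) *
        (Gamma (k + 1 / 2) * Gamma (m + 1 / 2) / (2 * Gamma (k + m + 1))))
      = (-1) ^ (l - k) * ((l + m).choose (l - k) : ℝ) * (l + n + m + k).choose k := by
  have hpoch : poch ((l : ℝ) + n + m + 1) k = (l + n + m + k) ! / (l + n + m) ! := by
    rw [← poch_natCast_add_one]
    push_cast
    rfl
  have hsign : ((-1) ^ l : ℝ) = (-1) ^ (l - k) * (-1) ^ k := by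
    rw [← pow_add, Nat.sub_add_cancel hk]
  rw [hpoch, poch_neg_natCast hk, Gamma_natCast_add_half k, ← Nat.cast_add,
    Gamma_nat_eq_factorial, cast_choose ℝ (by omega : l - k ≤ l + m),
    cast_choose ℝ (by omega : k ≤ l + n + m + k), hsign,
    show l + m - (l - k) = k + m by omega, Nat.add_sub_cancel, add_comm m l]
  have hpoch_half : 0 < poch (1 / 2) k := prod_pos fun i _ => by positivity
  have hGamma : 0 < Gamma (m + 1 / 2) := Gamma_pos_of_pos (by positivity)
  field_simp
  ring_nf
  exact Even.neg_one_pow ⟨k, by ring⟩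

theorem statement_7_general (m n l : ℕ) (t : ℝ) :
    jacobiP (n : ℝ) (m : ℝ) l (2 * t ^ 2 - 1)
      = (2 * (-1 : ℝ) ^ l * (Nat.factorial (m + l) : ℝ)) /
          (Real.sqrt π * (Nat.factorial l : ℝ) * Real.Gamma ((m : ℝ) + 1 / 2)) *
          ∫ v in (0 : ℝ)..1,
            (1 - v ^ 2) ^ ((m : ℝ) - 1 / 2) *
              hyp2F1 l ((l : ℝ) + n + m + 1) (1 / 2) (t ^ 2 * v ^ 2) := by
  rw [jacobiP_natCast_two_mul_sub_one, sum_choose_mul_sub_one_pow_mul_pow,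
    integral_one_sub_sq_rpow_mul_hyp2F1 l (by linarith [m.cast_nonneg (α := ℝ)]), mul_sum]
  refine sum_congr rfl fun k hk => ?_
  rw [← prefactor_mul_coeff_eq_choose_mul_choose (Nat.lt_succ_iff.1 (mem_range.1 hk)),
    ← pow_mul]
  ring

theorem statement_7 (m n l : ℕ) (hnm : m ≤ n) (t : ℝ) (ht1 : 0 ≤ t) (ht2 : t ≤ 1) :
    jacobiP (n : ℝ) (m : ℝ) l (2 * t ^ 2 - 1)
      = (2 * (-1 : ℝ) ^ l * (Nat.factorial (m + l) : ℝ)) /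
          (Real.sqrt π * (Nat.factorial l : ℝ) * Real.Gamma ((m : ℝ) + 1 / 2)) *
          ∫ v in (0 : ℝ)..1,
            (1 - v ^ 2) ^ ((m : ℝ) - 1 / 2) *
              hyp2F1 l ((l : ℝ) + n + m + 1) (1 / 2) (t ^ 2 * v ^ 2) :=
  statement_7_general m n l t
end

section
/- For every nonnegative integer ν, every real t > 0, and every u with 0 < u < π, the series θ_{2,ν}(t,u) = Σ_{ℓ=0}^∞ e^{−ℓ(ℓ+2ν+1)t}·cos((2ℓ+2ν+1)u) converges, is differentiable in u, and satisfies Σ_{ℓ=0}^∞ (2ℓ+2ν+1)·e^{−ℓ(ℓ+2ν+1)t}·C_{2ℓ+2ν}^{(1)}(cos u) = −(1/sin u)·∂θ_{2,ν}/∂u(t,u), where the left-hand series also converges. -/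
/-! `C_m^{(1)}` is the Chebyshev polynomial `U_m`: the expansion
`U_m = ∑ₖ (-1)ᵏ C(m-k, k) (2X)^(m-2k)` satisfies the three-term recurrence by Pascal's rule.
Hence `C_m^{(1)}(cos u) sin u = sin ((m+1)u)`, and the `ℓ`-th term of the left-hand series is
`-(1/sin u)` times the `u`-derivative of the `ℓ`-th term of `θ_{2,ν}`. Since
`e^{-ℓ(ℓ+2ν+1)t} ≤ e^{-tℓ}`, the differentiated series is dominated by the summable
`(2ℓ+2ν+1) e^{-tℓ}`, which justifies differentiating term by term. -/

open Real MeasureTheory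

open Polynomial Finset

namespace Polynomial.Chebyshev

variable (R : Type*) [CommRing R]

noncomputable def UTerm (m k : ℕ) : R[X] :=
  (-1) ^ k * ((m - k).choose k : R[X]) * (2 * X) ^ (m - 2 * k)

theorem UTerm_eq_zero {m k : ℕ} (h : m < 2 * k) : UTerm R m k = 0 := by
  simp [UTerm, Nat.choose_eq_zero_of_lt (by omega : m - k < k)]

theorem UTerm_add_two_zero (m : ℕ) : UTerm R (m + 2) 0 = 2 * X * UTerm R (m + 1) 0 := by
  simp only [UTerm, pow_zero, Nat.sub_zero, Nat.choose_zero_right, Nat.cast_one, mul_zero,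
    pow_succ]
  ring

theorem UTerm_add_two_succ (m k : ℕ) :
    UTerm R (m + 2) (k + 1) = 2 * X * UTerm R (m + 1) (k + 1) - UTerm R m k := by
  rcases lt_trichotomy m (2 * k) with h | rfl | h
  · simp [UTerm_eq_zero R h, UTerm_eq_zero R (show m + 1 < 2 * (k + 1) by omega),
      UTerm_eq_zero R (show m + 2 < 2 * (k + 1) by omega)]
  · simp [UTerm, show 2 * k + 2 - (k + 1) = k + 1 by omega, show 2 * k - k = k by omega,
      show 2 * k + 1 - (k + 1) = k by omega, show 2 * k + 2 - 2 * (k + 1) = 0 by omega, pow_succ]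
  · obtain ⟨j, rfl⟩ : ∃ j, m = 2 * k + 1 + j := ⟨m - (2 * k + 1), by omega⟩
    simp only [UTerm, show 2 * k + 1 + j + 2 - (k + 1) = k + j + 1 + 1 by omega,
      show 2 * k + 1 + j + 1 - (k + 1) = k + j + 1 by omega,
      show 2 * k + 1 + j - k = k + j + 1 by omega,
      show 2 * k + 1 + j + 2 - 2 * (k + 1) = j + 1 by omega,
      show 2 * k + 1 + j + 1 - 2 * (k + 1) = j by omega,
      show 2 * k + 1 + j - 2 * k = j + 1 by omega, Nat.choose_succ_succ, pow_succ]
    push_cast; ring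

theorem sum_range_UTerm_add_two (m N : ℕ) :
    ∑ k ∈ range (N + 1), UTerm R (m + 2) k =
      2 * X * ∑ k ∈ range (N + 1), UTerm R (m + 1) k - ∑ k ∈ range N, UTerm R m k := by
  simp only [sum_range_succ' _ N, UTerm_add_two_succ, UTerm_add_two_zero, sum_sub_distrib,
    mul_add, mul_sum]
  ring

theorem sum_range_UTerm_of_le (m : ℕ) {N : ℕ} (hN : m / 2 < N) :
    ∑ k ∈ range N, UTerm R m k = ∑ k ∈ range (m / 2 + 1), UTerm R m k :=
  (sum_subset (range_subset_range.2 hN) fun k _ hk =>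
    UTerm_eq_zero R (by simp only [mem_range] at hk; omega)).symm

theorem U_eq_sum_range_UTerm (m : ℕ) : U R m = ∑ k ∈ range (m / 2 + 1), UTerm R m k := by
  induction m using Nat.twoStepInduction with
  | zero => simp [UTerm]
  | one => simp [UTerm]
  | more m ih₀ ih₁ =>
    rw [← sum_range_UTerm_of_le R _ (show (m + 2) / 2 < m + 2 by omega),
      sum_range_UTerm_add_two, sum_range_UTerm_of_le R _ (show (m + 1) / 2 < m + 1 + 1 by omega),
      sum_range_UTerm_of_le R _ (show m / 2 < m + 1 by omega), ← ih₀, ← ih₁]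
    push_cast
    exact U_add_two R m

end Polynomial.Chebyshev

open Polynomial.Chebyshev in
theorem gegenbauerC_one_eq_eval_U (m : ℕ) (x : ℝ) : gegenbauerC m 1 x = (U ℝ m).eval x := by
  rw [U_eq_sum_range_UTerm, eval_finsetSum, gegenbauerC]
  refine sum_congr rfl fun k hk => ?_
  have hkm : 2 * k ≤ m := by simp only [mem_range] at hk; omega
  have hGamma : Real.Gamma (1 + m - k) = (m - k).factorial := by
    rw [← Real.Gamma_nat_eq_factorial, Nat.cast_sub (by omega : k ≤ m)]; ring_nf
  rw [UTerm, hGamma, Real.Gamma_one, one_mul, ← show m - k - k = m - 2 * k by omega,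
    ← Nat.cast_choose ℝ (by omega : k ≤ m - k)]
  simp

theorem gegenbauerC_one_cos_mul_sin (m : ℕ) (u : ℝ) :
    gegenbauerC m 1 (cos u) * sin u = sin ((m + 1) * u) := by
  rw [gegenbauerC_one_eq_eval_U]
  exact_mod_cast Polynomial.Chebyshev.U_real_cos u m

theorem summable_mul_of_abs_le_one {a b : ℕ → ℝ} (ha : Summable fun l => |a l|)
    (hb : ∀ l, |b l| ≤ 1) : Summable fun l => a l * b l :=
  ha.of_norm_bounded fun l => by
    simpa [abs_mul] using mul_le_of_le_one_right (abs_nonneg (a l)) (hb l)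

theorem hasDerivAt_tsum_mul_cos {a ω : ℕ → ℝ} (ha : Summable a)
    (haω : Summable fun l => |a l * ω l|) (w : ℝ) :
    HasDerivAt (fun w => ∑' l, a l * cos (ω l * w)) (∑' l, -(a l * ω l * sin (ω l * w))) w := by
  refine hasDerivAt_tsum (g := fun l w => a l * cos (ω l * w))
    (g' := fun l w => -(a l * ω l * sin (ω l * w))) haω (fun l w => ?_)
    (fun l w => ?_) (y₀ := 0) (by simpa using ha) w
  · exact (((hasDerivAt_id w).const_mul (ω l)).cos.const_mul (a l)).congr_deriv (by simp; ring)
  · simpa [abs_mul, mul_assoc] using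
      mul_le_of_le_one_right (abs_nonneg (a l * ω l)) (abs_sin_le_one (ω l * w))

theorem exp_neg_mul_mul_le_pow {ν t : ℝ} (hν : 0 ≤ ν) (ht : 0 ≤ t) (l : ℕ) :
    exp (-((l : ℝ) * (l + 2 * ν + 1)) * t) ≤ exp (-t) ^ l := by
  rw [← exp_nat_mul, exp_le_exp]
  nlinarith [mul_nonneg (mul_nonneg l.cast_nonneg (by positivity : (0 : ℝ) ≤ l + 2 * ν)) ht]

theorem summable_abs_exp_neg_mul_mul {ν t : ℝ} (hν : 0 ≤ ν) (ht : 0 < t) :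
    Summable fun l : ℕ => |exp (-((l : ℝ) * (l + 2 * ν + 1)) * t)| := by
  have hgeom := summable_geometric_of_lt_one (exp_pos _).le (exp_lt_one_iff.2 (neg_neg_of_pos ht))
  refine hgeom.of_nonneg_of_le (fun _ => abs_nonneg _) fun l => ?_
  rw [abs_of_pos (exp_pos _)]
  exact exp_neg_mul_mul_le_pow hν ht.le l

theorem summable_abs_exp_neg_mul_mul_mul {ν t : ℝ} (hν : 0 ≤ ν) (ht : 0 < t) :
    Summable fun l : ℕ =>
      |exp (-((l : ℝ) * (l + 2 * ν + 1)) * t) * (2 * l + 2 * ν + 1)| := by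
  have hr : ‖exp (-t)‖ < 1 := by
    rw [norm_of_nonneg (exp_pos _).le, exp_lt_one_iff]; linarith
  have hgeom : Summable fun l : ℕ => (2 * l + 2 * ν + 1) * exp (-t) ^ l := by
    have := ((summable_pow_mul_geometric_of_norm_lt_one 1 hr).mul_left 2).add
      ((summable_geometric_of_norm_lt_one hr).mul_left (2 * ν + 1))
    simpa [add_mul, mul_assoc, add_assoc] using this
  refine hgeom.of_nonneg_of_le (fun _ => abs_nonneg _) fun l => ?_
  rw [abs_of_nonneg (by positivity), mul_comm]
  gcongr
  exact exp_neg_mul_mul_le_pow hν ht.le l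

theorem statement_14 (ν : ℕ) (t : ℝ) (ht : 0 < t) (u : ℝ) (hu1 : 0 < u) (hu2 : u < π) :
    (Summable fun l : ℕ =>
        Real.exp (-((l : ℝ) * ((l : ℝ) + 2 * ν + 1)) * t) *
          Real.cos ((2 * (l : ℝ) + 2 * ν + 1) * u)) ∧
    DifferentiableAt ℝ
      (fun w : ℝ => ∑' l : ℕ,
        Real.exp (-((l : ℝ) * ((l : ℝ) + 2 * ν + 1)) * t) *
          Real.cos ((2 * (l : ℝ) + 2 * ν + 1) * w)) u ∧
    (Summable fun l : ℕ =>
        (2 * (l : ℝ) + 2 * ν + 1) * Real.exp (-((l : ℝ) * ((l : ℝ) + 2 * ν + 1)) * t) *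
          gegenbauerC (2 * l + 2 * ν) 1 (Real.cos u)) ∧
    (∑' l : ℕ,
        (2 * (l : ℝ) + 2 * ν + 1) * Real.exp (-((l : ℝ) * ((l : ℝ) + 2 * ν + 1)) * t) *
          gegenbauerC (2 * l + 2 * ν) 1 (Real.cos u))
      = -(1 / Real.sin u) *
          deriv (fun w : ℝ => ∑' l : ℕ,
            Real.exp (-((l : ℝ) * ((l : ℝ) + 2 * ν + 1)) * t) *
              Real.cos ((2 * (l : ℝ) + 2 * ν + 1) * w)) u := by
  have ha := summable_abs_exp_neg_mul_mul (Nat.cast_nonneg ν) ht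
  have haω := summable_abs_exp_neg_mul_mul_mul (Nat.cast_nonneg ν) ht
  have hder := hasDerivAt_tsum_mul_cos ha.of_abs haω u
  have hsin : sin u ≠ 0 := (sin_pos_of_pos_of_lt_pi hu1 hu2).ne'
  have hterm : ∀ l : ℕ,
      (2 * (l : ℝ) + 2 * ν + 1) * exp (-((l : ℝ) * (l + 2 * ν + 1)) * t) *
        gegenbauerC (2 * l + 2 * ν) 1 (cos u) =
      -(1 / sin u) * -(exp (-((l : ℝ) * (l + 2 * ν + 1)) * t) * (2 * l + 2 * ν + 1) *
        sin ((2 * l + 2 * ν + 1) * u)) := fun l => by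
    have h := gegenbauerC_one_cos_mul_sin (2 * l + 2 * ν) u
    push_cast at h
    rw [← h]
    field_simp
  refine ⟨summable_mul_of_abs_le_one ha fun l => abs_cos_le_one _, hder.differentiableAt, ?_, ?_⟩
  · simp_rw [hterm]
    exact (summable_mul_of_abs_le_one haω fun l => abs_sin_le_one _).neg.mul_left _
  · rw [hder.deriv, ← tsum_mul_left]
    exact tsum_congr hterm
end
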